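/- arXiv:2209.04950 — 6 statements merged into one kernel-verified Lean document; each statement's English description precedes it below -/
import Mathlib

section
/- Let y_n (n = 0,1,2,...) be a nonnegative sequence satisfying y_{n+1} ≤ c·b^n·y_n^{1+δ} for constants c, δ > 0 and b ≥ 1. Then y_n ≤ c^{((1+δ)^n−1)/δ} · b^{((1+δ)^n−1)/δ² − n/δ} · y_0^{(1+δ)^n} for all n. -/
open Real Filter

/-- Ladyzhenskaya–Ural'tseva iteration lemma (growth estimate form). -/
theorem stmt0 (y : ℕ → ℝ) (c δ b : ℝ) (hc : 0 < c) (hδ : 0 < δ) (hb : 1 ≤ b)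
    (hy : ∀ n, 0 ≤ y n)
    (hrec : ∀ n, y (n + 1) ≤ c * b ^ n * y n ^ (1 + δ)) :
    ∀ n : ℕ,
      y n ≤ c ^ (((1 + δ) ^ n - 1) / δ) *
        b ^ (((1 + δ) ^ n - 1) / δ ^ 2 - (n : ℝ) / δ) *
        y 0 ^ ((1 + δ) ^ n) := by
  have hbpos : (0:ℝ) < b := lt_of_lt_of_le one_pos hb
  have h1δ : (0:ℝ) < 1 + δ := by linarith
  intro n
  induction n with
  | zero =>
    simp
  | succ n ih =>
    push_cast
    have hδne : δ ≠ 0 := ne_of_gt hδ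
    have eA : ((1+δ)^(n+1) - 1)/δ = 1 + ((1+δ)^n - 1)/δ * (1+δ) := by
      field_simp; ring
    have eB : ((1+δ)^(n+1) - 1)/δ^2 - ((n:ℝ)+1)/δ
        = (n:ℝ) + (((1+δ)^n - 1)/δ^2 - (n:ℝ)/δ) * (1+δ) := by
      field_simp; ring
    have eC : ((1:ℝ)+δ)^(n+1) = (1+δ)^n * (1+δ) := pow_succ _ _
    calc y (n+1) ≤ c * b ^ n * y n ^ (1+δ) := hrec n
      _ ≤ c * b ^ n * (c ^ (((1 + δ) ^ n - 1) / δ) *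
            b ^ (((1 + δ) ^ n - 1) / δ ^ 2 - (n : ℝ) / δ) *
            y 0 ^ ((1 + δ) ^ n)) ^ (1+δ) := by
          gcongr
          exact hy n
      _ = c ^ (((1 + δ) ^ (n+1) - 1) / δ) *
          b ^ (((1 + δ) ^ (n+1) - 1) / δ ^ 2 - ((n:ℝ)+1) / δ) *
          y 0 ^ ((1 + δ) ^ (n+1)) := by
          rw [eA, eB, eC, Real.rpow_add hc, Real.rpow_one,
            Real.rpow_add hbpos, Real.rpow_natCast,
            Real.rpow_mul hc.le, Real.rpow_mul hbpos.le, Real.rpow_mul (hy 0),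
            Real.mul_rpow (by positivity) (Real.rpow_nonneg (hy 0) _),
            Real.mul_rpow (by positivity) (by positivity)]
          ring
end

section
/- Let y_n be a nonnegative sequence satisfying y_{n+1} ≤ c·b^n·y_n^{1+δ} with c, δ > 0 and b > 1. If y_0 ≤ c^{−1/δ}·b^{−1/δ²}, then y_n ≤ y_0·b^{−n/δ} for all n, and consequently y_n → 0 as n → ∞. -/
/-!
Put `q = b ^ (-1/δ)`, so that `b * q ^ δ = 1`. If `y n ≤ y 0 * q ^ n`, the recursion gives
`y (n+1) ≤ (c * y 0 ^ δ) * (b * q ^ δ) ^ n * y 0 * q ^ n`, and the smallness of `y 0` is exactly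
`c * y 0 ^ δ ≤ q`; so `y` is dominated by a geometric sequence of ratio `q < 1`.
-/

open Real Filter

theorem le_mul_pow_of_le_mul_rpow_one_add {y : ℕ → ℝ} {c δ b q : ℝ} (hc : 0 ≤ c) (hδ : 0 ≤ δ)
    (hb : 0 ≤ b) (hy : ∀ n, 0 ≤ y n) (hbq : b * q ^ δ ≤ 1)
    (hrec : ∀ n, y (n + 1) ≤ c * b ^ n * y n ^ (1 + δ)) (h0 : c * y 0 ^ δ ≤ q) (n : ℕ) :
    y n ≤ y 0 * q ^ n := by
  have hq : 0 ≤ q := (mul_nonneg hc (rpow_nonneg (hy 0) δ)).trans h0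
  induction n with
  | zero => simp
  | succ n ih =>
    calc y (n + 1) ≤ c * b ^ n * y n ^ (1 + δ) := hrec n
      _ ≤ c * b ^ n * (y 0 * q ^ n) ^ (1 + δ) := by gcongr; exact hy n
      _ = (c * y 0 ^ δ) * (b * q ^ δ) ^ n * (y 0 * q ^ n) := by
        rw [rpow_one_add' (mul_nonneg (hy 0) (by positivity)) (by linarith),
          mul_rpow (hy 0) (by positivity), ← rpow_pow_comm hq]
        ring
      _ ≤ q * 1 * (y 0 * q ^ n) := by
        have := hy 0
        gcongr
        exact pow_le_one₀ (by positivity) hbq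
      _ = y 0 * q ^ (n + 1) := by ring

theorem mul_rpow_le_of_le_rpow_mul_rpow {x c δ b : ℝ} (hc : 0 < c) (hδ : 0 < δ) (hb : 0 < b)
    (hx : 0 ≤ x) (h : x ≤ c ^ (-(1 / δ)) * b ^ (-(1 / δ ^ 2))) :
    c * x ^ δ ≤ b ^ (-(1 / δ)) := by
  have hpow : (c ^ (-(1 / δ)) * b ^ (-(1 / δ ^ 2))) ^ δ = c⁻¹ * b ^ (-(1 / δ)) := by
    rw [mul_rpow (by positivity) (by positivity), ← rpow_mul hc.le, ← rpow_mul hb.le,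
      ← rpow_neg_one]
    congr 2 <;> field_simp
  calc c * x ^ δ ≤ c * (c⁻¹ * b ^ (-(1 / δ))) := by
        gcongr
        exact hpow ▸ rpow_le_rpow hx h hδ.le
    _ = b ^ (-(1 / δ)) := by field_simp

/-- Ladyzhenskaya–Ural'tseva iteration lemma, convergence form. -/
theorem stmt1 (y : ℕ → ℝ) (c δ b : ℝ) (hc : 0 < c) (hδ : 0 < δ) (hb : 1 < b)
    (hy : ∀ n, 0 ≤ y n)
    (hrec : ∀ n, y (n + 1) ≤ c * b ^ n * y n ^ (1 + δ))
    (h0 : y 0 ≤ c ^ (-(1 / δ)) * b ^ (-(1 / δ ^ 2))) :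
    (∀ n : ℕ, y n ≤ y 0 * b ^ (-(n : ℝ) / δ)) ∧
      Tendsto y atTop (nhds 0) := by
  have hb0 : 0 < b := one_pos.trans hb
  set q := b ^ (-(1 / δ))
  have hq0 : 0 ≤ q := by positivity
  have hq1 : q < 1 := rpow_lt_one_of_one_lt_of_neg hb (by simp [hδ])
  have hbq : b * q ^ δ = 1 := by
    rw [← rpow_mul hb0.le, show -(1 / δ) * δ = -1 by field_simp, rpow_neg_one,
      mul_inv_cancel₀ hb0.ne']
  have hpow (n : ℕ) : b ^ (-(n : ℝ) / δ) = q ^ n := by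
    rw [← rpow_mul_natCast hb0.le]
    ring_nf
  have hdecay (n : ℕ) : y n ≤ y 0 * q ^ n :=
    le_mul_pow_of_le_mul_rpow_one_add hc.le hδ.le hb0.le hy hbq.le hrec
      (mul_rpow_le_of_le_rpow_mul_rpow hc hδ hb0 (hy 0) h0) n
  refine ⟨fun n => hpow n ▸ hdecay n, squeeze_zero hy hdecay ?_⟩
  simpa using (tendsto_pow_atTop_nhds_zero_of_lt_one hq0 hq1).const_mul (y 0)
end

section
/- Let a : (0,∞) → (0,∞) be continuous with I(u) := ∫_u^∞ dv/(v·a(v)) finite for every u > 0. If limsup_{s→0} a(s)·I(s) < ∞, then I(s) → ∞ as s → 0. -/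
open Real Filter MeasureTheory Set

/-- If `limsup_{s→0} a(s) I(s) < ∞` with `I(u) = ∫_u^∞ dv/(v a(v))` finite,
then `I(s) → ∞` as `s → 0⁺`. -/
theorem stmt3 (a : ℝ → ℝ) (M : ℝ)
    (ha_cont : ContinuousOn a (Ioi 0)) (ha_pos : ∀ s > (0 : ℝ), 0 < a s)
    (hint : ∀ u > (0 : ℝ), IntegrableOn (fun v => 1 / (v * a v)) (Ioi u))
    (hM : ∀ᶠ s in nhdsWithin 0 (Ioi 0),
      a s * (∫ v in Ioi s, 1 / (v * a v)) ≤ M) :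
    Tendsto (fun s => ∫ v in Ioi s, 1 / (v * a v))
      (nhdsWithin 0 (Ioi 0)) atTop := by
  set f : ℝ → ℝ := fun v => 1 / (v * a v) with hf
  set I : ℝ → ℝ := fun s => ∫ v in Ioi s, f v with hIdef
  have hfpos : ∀ v > (0:ℝ), 0 < f v := by
    intro v hv
    have := ha_pos v hv
    simp only [hf]
    positivity
  -- positivity of I
  have hIpos : ∀ u > (0:ℝ), 0 < I u := by
    intro u hu
    have h1 : IntegrableOn f (Ioc u (u+1)) := (hint u hu).mono_set Ioc_subset_Ioi_self
    have h2 : (0:ℝ) < ∫ v in u..(u+1), f v := by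
      apply intervalIntegral.intervalIntegral_pos_of_pos_on
      · exact (intervalIntegrable_iff_integrableOn_Ioc_of_le (by linarith)).2 h1
      · intro x hx; exact hfpos x (lt_trans hu hx.1)
      · linarith
    have h3 : ∫ v in u..(u+1), f v = ∫ v in Ioc u (u+1), f v :=
      intervalIntegral.integral_of_le (by linarith)
    have h4 : ∫ v in Ioc u (u+1), f v ≤ I u := by
      apply setIntegral_mono_set (hint u hu)
      · filter_upwards [ae_restrict_mem measurableSet_Ioi] with v hv
        exact (hfpos v (lt_trans hu hv)).le
      · exact HasSubset.Subset.eventuallyLE Ioc_subset_Ioi_self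
    rw [h3] at h2
    linarith
  -- antitonicity of I
  have hanti : ∀ s t : ℝ, 0 < s → s ≤ t → I t ≤ I s := by
    intro s t hs hst
    apply setIntegral_mono_set (hint s hs)
    · filter_upwards [ae_restrict_mem measurableSet_Ioi] with v hv
      exact (hfpos v (lt_trans hs hv)).le
    · exact HasSubset.Subset.eventuallyLE (Ioi_subset_Ioi hst)
  -- extract a window where the bound holds
  obtain ⟨ε, hε, hb⟩ : ∃ ε > 0, ∀ s, 0 < s → s < ε → a s * I s ≤ M := by
    have h := eventually_nhdsWithin_iff.mp hM
    rw [Metric.eventually_nhds_iff] at h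
    obtain ⟨ε, hε, h⟩ := h
    refine ⟨ε, hε, fun s hs hsε => h ?_ hs⟩
    simp only [Real.dist_eq, sub_zero, abs_of_pos hs]
    exact hsε
  set u : ℝ := ε / 2 with hudef
  have hu : 0 < u := by positivity
  have huε : u < ε := by simp only [hudef]; linarith
  have hM0 : 0 < M :=
    lt_of_lt_of_le (mul_pos (ha_pos u hu) (hIpos u hu)) (hb u hu huε)
  set c : ℝ := I u / M with hcdef
  have hc : 0 < c := div_pos (hIpos u hu) hM0
  -- key inequality
  have hkey : ∀ s : ℝ, 0 < s → s < u → I u + c * (log u - log s) ≤ I s := by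
    intro s hs hsu
    have hIocInt : IntegrableOn f (Ioc s u) := (hint s hs).mono_set Ioc_subset_Ioi_self
    have hsplit : I s = (∫ v in Ioc s u, f v) + I u := by
      simp only [hIdef]
      rw [← setIntegral_union (Ioc_disjoint_Ioi le_rfl) measurableSet_Ioi hIocInt (hint u hu),
        Ioc_union_Ioi_eq_Ioi hsu.le]
    have hgInt : IntegrableOn (fun v => c / v) (Ioc s u) := by
      have : ContinuousOn (fun v : ℝ => c / v) (Icc s u) :=
        continuousOn_const.div continuousOn_id (fun x hx => ne_of_gt (lt_of_lt_of_le hs hx.1))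
      exact this.integrableOn_Icc.mono_set Ioc_subset_Icc_self
    have hmono : ∫ v in Ioc s u, c / v ≤ ∫ v in Ioc s u, f v := by
      apply setIntegral_mono_on hgInt hIocInt measurableSet_Ioc
      intro v hv
      have hv0 : 0 < v := lt_trans hs hv.1
      have hvε : v < ε := lt_of_le_of_lt hv.2 huε
      have h1 : a v * I u ≤ M :=
        le_trans (mul_le_mul_of_nonneg_left (hanti v u hv0 hv.2) (ha_pos v hv0).le)
          (hb v hv0 hvε)
      have hc1 : c * a v ≤ 1 := by
        rw [hcdef, div_mul_eq_mul_div, div_le_one hM0]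
        linarith [h1]
      simp only [hf]
      rw [div_le_div_iff₀ hv0 (mul_pos hv0 (ha_pos v hv0))]
      nlinarith [hc1, hv0]
    have hcalc : ∫ v in Ioc s u, c / v = c * (log u - log s) := by
      rw [← intervalIntegral.integral_of_le hsu.le]
      have h5 : ∫ v in s..u, c / v = c * ∫ v in s..u, 1 / v := by
        simp_rw [div_eq_mul_one_div c]
        rw [intervalIntegral.integral_const_mul]
      rw [h5, integral_one_div, Real.log_div (ne_of_gt hu) (ne_of_gt hs)]
      intro h0
      rw [Set.uIcc_of_le hsu.le] at h0
      exact absurd h0.1 (not_le.2 hs)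
    linarith [hsplit, hmono, hcalc]
  -- conclude by comparison
  have hlog : Tendsto (fun s : ℝ => I u + c * (log u - log s)) (nhdsWithin 0 (Ioi 0)) atTop := by
    apply tendsto_atTop_add_const_left
    apply Tendsto.const_mul_atTop hc
    apply tendsto_atTop_add_const_left
    have hneg : Tendsto (fun s : ℝ => -log s) (nhdsWithin 0 (Ioi 0)) atTop :=
      tendsto_neg_atBot_atTop.comp Real.tendsto_log_nhdsGT_zero
    simpa [sub_eq_add_neg] using hneg
  apply tendsto_atTop_mono' _ _ hlog
  filter_upwards [Ioo_mem_nhdsGT_of_mem (by constructor <;> [exact le_rfl; exact hu])] with s hs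
  exact hkey s hs.1 hs.2
end

section
/- Let a : (0,∞) → (0,∞) be continuous, I(u) = ∫_u^∞ dv/(v a(v)) < ∞, and suppose there exist c, μ > 0 with a(u)I(u)^μ ≥ c·a(v)I(v)^μ for all 0 < u < v. With Λ chosen so that 0 < Λ < 1/sup(aI), H(s) = (Λ I(s))^{−1/Λ}, F(s) = s^{−1}H(s)^{Λ+1}, and G(s) = ∫_0^s √(F'(σ))dσ, there exists a constant c' > 0 such that F(s) ≤ c'·G(s)·G'(s) for all s > 0. -/
open Real Filter MeasureTheory Set intervalIntegral
open Topology

/-!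
Put `β = (Λ + 1) / Λ`, so that `F x = x⁻¹ (Λ I x)^(-β)` and, as `I' = -1/(x a)`,
`F' = F (β / (x a I) - 1/x)`. The bound `a I ≤ β - 1 = 1/Λ` pins `F'` between
`D = F/(x a I)` and `β D`, and makes `I` blow up at `0⁺` (since `(log I)' ≤ -Λ/x`).

For `p > 0` the function `φ = I^(-p)` increases from `0`, and
`D = Λ^(-β) a I^(2p+1-β) φ'² / p²`. With `p = β/2` the middle factor is `a I`, which is
bounded, so `√F'` is dominated by a multiple of `φ'`; hence `G` is well defined with
`G' = √F'`. With `p = γ = (β - 1 + μ)/2` it is `a I^μ`, which is at least `c a(s) I(s)^μ`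
on `(0, s)`. Integrating gives `G s ≥ √c k φ(s)` and `G' s ≥ k φ'(s)` for
`k² = Λ^(-β) a(s) I(s)^μ / γ²`, and `k² φ(s) φ'(s) = F(s)/γ`, so `F ≤ (γ/√c) G G'`.
-/

theorem setIntegral_Ioi_pos {f : ℝ → ℝ} {u : ℝ} (hf : IntegrableOn f (Ioi u))
    (hpos : ∀ v ∈ Ioi u, 0 < f v) : 0 < ∫ v in Ioi u, f v := by
  rw [setIntegral_pos_iff_support_of_nonneg_ae
    ((ae_restrict_iff' measurableSet_Ioi).2 (ae_of_all _ fun v hv => (hpos v hv).le)) hf,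
    inter_eq_self_of_subset_right fun v hv => Function.mem_support.2 (hpos v hv).ne', volume_Ioi]
  exact ENNReal.zero_lt_top

theorem hasDerivAt_setIntegral_Ioi {f : ℝ → ℝ} {t s : ℝ} (hts : t < s)
    (hf : IntegrableOn f (Ioi t)) (hfs : ContinuousAt f s) :
    HasDerivAt (fun u => ∫ v in Ioi u, f v) (-f s) s := by
  have hmeas : StronglyMeasurableAtFilter f (𝓝 s) :=
    AEStronglyMeasurable.stronglyMeasurableAtFilter_of_mem hf.aestronglyMeasurable
      (Ioi_mem_nhds hts)
  have hint : IntervalIntegrable f volume t s :=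
    (intervalIntegrable_iff_integrableOn_Ioc_of_le hts.le).2 (hf.mono_set Ioc_subset_Ioi_self)
  refine ((integral_hasDerivAt_right hint hmeas hfs).const_sub
    (∫ v in Ioi t, f v)).congr_of_eventuallyEq ?_
  filter_upwards [Ioi_mem_nhds hts] with u hu
  rw [← integral_Ioi_sub_Ioi hf (le_of_lt hu), sub_sub_cancel]

theorem tendsto_nhdsGT_atTop_of_hasDerivAt_le_neg_div {g g' : ℝ → ℝ} {k b : ℝ} (hb : 0 < b)
    (hg : ∀ x ∈ Ioc 0 b, HasDerivAt g (g' x) x) (hg' : ∀ x ∈ Ioo 0 b, g' x ≤ -k / x)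
    (hk : 0 < k) : Tendsto g (𝓝[>] 0) atTop := by
  have hanti : AntitoneOn (fun x => g x + k * log x) (Ioc 0 b) := by
    have hderiv : ∀ x ∈ Ioc 0 b, HasDerivAt (fun x => g x + k * log x) (g' x + k * x⁻¹) x :=
      fun x hx => (hg x hx).add ((hasDerivAt_log hx.1.ne').const_mul k)
    refine antitoneOn_of_hasDerivWithinAt_nonpos (f' := fun x => g' x + k * x⁻¹) (convex_Ioc 0 b)
      (fun x hx => (hderiv x hx).continuousAt.continuousWithinAt) (fun x hx => ?_) (fun x hx => ?_)
    · rw [interior_Ioc] at hx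
      exact (hderiv x (Ioo_subset_Ioc_self hx)).hasDerivWithinAt
    · rw [interior_Ioc] at hx
      have := hg' x hx
      rw [neg_div] at this
      rw [← div_eq_mul_inv]
      linarith
  have hlim : Tendsto (fun x => g b + k * log b + -(k * log x)) (𝓝[>] 0) atTop :=
    tendsto_atTop_add_const_left _ _
      (tendsto_neg_atBot_atTop.comp (tendsto_log_nhdsGT_zero.const_mul_atBot hk))
  refine tendsto_atTop_mono' _ ?_ hlim
  filter_upwards [Ioc_mem_nhdsGT hb] with x hx
  have := hanti hx ⟨hb, le_rfl⟩ hx.2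
  dsimp only at this ⊢
  linarith

theorem intervalIntegrable_deriv_of_nonneg_of_tendsto {g g' : ℝ → ℝ} {a b ga gb : ℝ}
    (hab : a < b) (hderiv : ∀ x ∈ Ioo a b, HasDerivAt g (g' x) x)
    (hpos : ∀ x ∈ Ioo a b, 0 ≤ g' x) (ha : Tendsto g (𝓝[>] a) (𝓝 ga))
    (hb : Tendsto g (𝓝[<] b) (𝓝 gb)) : IntervalIntegrable g' volume a b := by
  classical
  set G : ℝ → ℝ := Function.update (Function.update g a ga) b gb
  have hGderiv : ∀ x ∈ Ioo a b, HasDerivAt G (g' x) x := by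
    refine fun x hx => (hderiv x hx).congr_of_eventuallyEq ?_
    filter_upwards [Ioo_mem_nhds hx.1 hx.2] with y hy
    simp only [G]
    rw [Function.update_of_ne hy.2.ne, Function.update_of_ne hy.1.ne']
  have hGcont : ContinuousOn G (Icc a b) := by
    rw [continuousOn_update_iff, continuousOn_update_iff, Icc_sdiff_right, Ico_sdiff_left]
    refine ⟨⟨fun z hz => (hderiv z hz).continuousAt.continuousWithinAt, fun _ =>
      ha.mono_left (nhdsWithin_mono _ Ioo_subset_Ioi_self)⟩, fun _ => ?_⟩
    refine (hb.congr' ?_).mono_left (nhdsWithin_mono _ Ico_subset_Iio_self)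
    filter_upwards [Ioo_mem_nhdsLT hab] with z hz
    exact (Function.update_of_ne hz.1.ne' _ _).symm
  exact (intervalIntegrable_iff_integrableOn_Ioc_of_le hab.le).2
    (integrableOn_deriv_of_nonneg hGcont hGderiv hpos)

theorem sub_le_integral_of_hasDerivAt_of_tendsto {f g g' : ℝ → ℝ} {a b ga gb : ℝ}
    (hab : a < b) (hderiv : ∀ x ∈ Ioo a b, HasDerivAt g (g' x) x)
    (hpos : ∀ x ∈ Ioo a b, 0 ≤ g' x) (hle : ∀ x ∈ Ioo a b, g' x ≤ f x)
    (hf : IntervalIntegrable f volume a b) (ha : Tendsto g (𝓝[>] a) (𝓝 ga))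
    (hb : Tendsto g (𝓝[<] b) (𝓝 gb)) : gb - ga ≤ ∫ x in a..b, f x := by
  have hg' := intervalIntegrable_deriv_of_nonneg_of_tendsto hab hderiv hpos ha hb
  rw [← integral_eq_sub_of_hasDerivAt_of_tendsto hab hderiv hg' ha hb]
  exact integral_mono_on_of_le_Ioo hab.le hg' hf hle

theorem inv_mul_rpow_div_eq {x A J Λ β p : ℝ} (hx : 0 < x) (hA : 0 < A) (hJ : 0 < J)
    (hΛ : 0 < Λ) (hp : p ≠ 0) :
    x⁻¹ * (Λ * J) ^ (-β) / (x * A * J) =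
      Λ ^ (-β) * (A * J ^ (2 * p + 1 - β)) / p ^ 2 * (p * J ^ (-p) / (x * A * J)) ^ 2 := by
  have hJp : J ^ (2 * p + 1 - β) * (J ^ (-p)) ^ 2 = J ^ (-β) * J := by
    rw [← rpow_natCast, ← rpow_mul hJ.le, ← rpow_add hJ, ← rpow_add_one hJ.ne']
    congr 1
    push_cast
    ring
  rw [mul_rpow hΛ.le hJ.le]
  field_simp
  exact hJp.symm

theorem mul_le_sqrt_of_inv_mul_rpow_div_le {x A J Λ β p k D : ℝ} (hx : 0 < x) (hA : 0 < A)
    (hJ : 0 < J) (hΛ : 0 < Λ) (hp : 0 < p)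
    (hkA : k ^ 2 ≤ Λ ^ (-β) * (A * J ^ (2 * p + 1 - β)) / p ^ 2)
    (hD : x⁻¹ * (Λ * J) ^ (-β) / (x * A * J) ≤ D) :
    k * (p * J ^ (-p) / (x * A * J)) ≤ √D := by
  rw [inv_mul_rpow_div_eq hx hA hJ hΛ hp.ne'] at hD
  refine le_sqrt_of_sq_le ?_
  rw [mul_pow]
  exact (mul_le_mul_of_nonneg_right hkA (sq_nonneg _)).trans hD

theorem sqrt_le_mul_of_le_inv_mul_rpow_div {x A J Λ β p k D : ℝ} (hx : 0 < x) (hA : 0 < A)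
    (hJ : 0 < J) (hΛ : 0 < Λ) (hp : 0 < p) (hk : 0 ≤ k)
    (hkA : β * (Λ ^ (-β) * (A * J ^ (2 * p + 1 - β)) / p ^ 2) ≤ k ^ 2)
    (hD : D ≤ β * (x⁻¹ * (Λ * J) ^ (-β) / (x * A * J))) :
    √D ≤ k * (p * J ^ (-p) / (x * A * J)) := by
  have hφ : 0 ≤ p * J ^ (-p) / (x * A * J) := by positivity
  rw [inv_mul_rpow_div_eq hx hA hJ hΛ hp.ne', ← mul_assoc] at hD
  refine sqrt_le_iff.2 ⟨by positivity, ?_⟩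
  rw [mul_pow]
  exact hD.trans (mul_le_mul_of_nonneg_right hkA (sq_nonneg _))

theorem inv_mul_rpow_eq {x A J Λ β p k : ℝ} (hx : 0 < x) (hA : 0 < A) (hJ : 0 < J)
    (hΛ : 0 < Λ) (hp : 0 < p) (hkA : k ^ 2 = Λ ^ (-β) * (A * J ^ (2 * p + 1 - β)) / p ^ 2) :
    x⁻¹ * (Λ * J) ^ (-β) = p * (k * J ^ (-p)) * (k * (p * J ^ (-p) / (x * A * J))) := by
  have h := inv_mul_rpow_div_eq (β := β) hx hA hJ hΛ hp.ne'
  rw [← hkA, div_eq_iff (by positivity)] at h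
  rw [h]
  field_simp

theorem hasDerivAt_rpow_neg {a I : ℝ → ℝ} {x p : ℝ} (hI : HasDerivAt I (-(1 / (x * a x))) x)
    (hIx : 0 < I x) : HasDerivAt (fun y => I y ^ (-p)) (p * I x ^ (-p) / (x * a x * I x)) x := by
  convert hI.rpow_const (p := -p) (Or.inl hIx.ne') using 1
  rw [rpow_sub_one hIx.ne']
  field_simp

section
variable {a I F : ℝ → ℝ} {Λ β : ℝ}

theorem hasDerivAt_of_eq_inv_mul_rpow
    (hI : ∀ x > 0, HasDerivAt I (-(1 / (x * a x))) x) (hIpos : ∀ x > 0, 0 < I x)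
    (hΛ : 0 < Λ) (hF : ∀ x > 0, F x = x⁻¹ * (Λ * I x) ^ (-β)) {x : ℝ} (hx : 0 < x) :
    HasDerivAt F (F x * (β / (x * a x * I x) - x⁻¹)) x := by
  have hFx : F x = x⁻¹ * (Λ ^ (-β) * I x ^ (-β)) := by
    rw [hF x hx, mul_rpow hΛ.le (hIpos x hx).le]
  have h := (hasDerivAt_inv hx.ne').mul
    ((hasDerivAt_rpow_neg (p := β) (hI x hx) (hIpos x hx)).const_mul (Λ ^ (-β)))
  refine (h.congr_deriv ?_).congr_of_eventuallyEq ?_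
  · have := hIpos x hx
    rw [hFx]
    field_simp
    ring
  · filter_upwards [Ioi_mem_nhds hx] with y hy
    rw [hF y hy, mul_rpow hΛ.le (hIpos y hy).le]
    rfl

theorem deriv_mem_Icc_of_eq_inv_mul_rpow (ha : ∀ x > 0, 0 < a x)
    (hI : ∀ x > 0, HasDerivAt I (-(1 / (x * a x))) x) (hIpos : ∀ x > 0, 0 < I x)
    (hΛ : 0 < Λ) (hF : ∀ x > 0, F x = x⁻¹ * (Λ * I x) ^ (-β)) {x : ℝ} (hx : 0 < x)
    (haI : a x * I x ≤ β - 1) :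
    deriv F x ∈ Icc (F x / (x * a x * I x)) (β * (F x / (x * a x * I x))) := by
  have hax := ha x hx
  have hIx := hIpos x hx
  have hFx : 0 < F x := by
    rw [hF x hx]
    positivity
  rw [(hasDerivAt_of_eq_inv_mul_rpow hI hIpos hΛ hF hx).deriv]
  constructor
  · have : F x * (β / (x * a x * I x) - x⁻¹) - F x / (x * a x * I x)
        = F x / (x * a x * I x) * (β - 1 - a x * I x) := by
      field_simp
      ring
    have : 0 ≤ F x / (x * a x * I x) * (β - 1 - a x * I x) :=
      mul_nonneg (by positivity) (by linarith)
    linarith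
  · have : 0 ≤ F x * x⁻¹ := by positivity
    have : F x * (β / (x * a x * I x)) = β * (F x / (x * a x * I x)) := by ring
    rw [mul_sub]
    linarith

theorem continuousOn_deriv_of_eq_inv_mul_rpow (ha_cont : ContinuousOn a (Ioi 0))
    (ha : ∀ x > 0, 0 < a x)
    (hI : ∀ x > 0, HasDerivAt I (-(1 / (x * a x))) x) (hIpos : ∀ x > 0, 0 < I x)
    (hΛ : 0 < Λ) (hF : ∀ x > 0, F x = x⁻¹ * (Λ * I x) ^ (-β)) :
    ContinuousOn (deriv F) (Ioi 0) := by
  have hFc : ContinuousOn F (Ioi 0) := fun x hx =>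
    (hasDerivAt_of_eq_inv_mul_rpow hI hIpos hΛ hF hx).continuousAt.continuousWithinAt
  have hIc : ContinuousOn I (Ioi 0) := fun x hx => (hI x hx).continuousAt.continuousWithinAt
  refine ContinuousOn.congr (f := fun x => F x * (β / (x * a x * I x) - x⁻¹)) ?_
    fun x hx => (hasDerivAt_of_eq_inv_mul_rpow hI hIpos hΛ hF hx).deriv
  refine hFc.mul ((continuousOn_const.div (continuousOn_id.mul ha_cont |>.mul hIc) ?_).sub
    (continuousOn_id.inv₀ ?_))
  · exact fun x hx => (mul_pos (mul_pos hx (ha x hx)) (hIpos x hx)).ne'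
  · exact fun x hx => ne_of_gt hx

theorem tendsto_nhdsGT_atTop_of_mul_le (ha : ∀ x > 0, 0 < a x)
    (hI : ∀ x > 0, HasDerivAt I (-(1 / (x * a x))) x) (hIpos : ∀ x > 0, 0 < I x)
    (hβ : 1 < β) (haI : ∀ x > 0, a x * I x ≤ β - 1) : Tendsto I (𝓝[>] 0) atTop := by
  have hlog : Tendsto (fun x => log (I x)) (𝓝[>] 0) atTop := by
    refine tendsto_nhdsGT_atTop_of_hasDerivAt_le_neg_div one_pos
      (fun x hx => (hI x hx.1).log (hIpos x hx.1).ne') (fun x hx => ?_) (inv_pos.2 (sub_pos.2 hβ))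
    have := ha x hx.1
    have := hIpos x hx.1
    have := haI x hx.1
    have := hx.1
    rw [neg_div, neg_div, div_div, neg_le_neg_iff, ← one_div, div_div,
      one_div_le_one_div (by positivity) (by positivity)]
    nlinarith
  refine tendsto_atTop_mono' _ ?_ hlog
  filter_upwards [self_mem_nhdsWithin] with x hx
  linarith [log_le_sub_one_of_pos (hIpos x hx)]

theorem intervalIntegrable_sqrt_deriv_of_eq_inv_mul_rpow (ha_cont : ContinuousOn a (Ioi 0))
    (ha : ∀ x > 0, 0 < a x)
    (hI : ∀ x > 0, HasDerivAt I (-(1 / (x * a x))) x) (hIpos : ∀ x > 0, 0 < I x)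
    (hΛ : 0 < Λ) (hF : ∀ x > 0, F x = x⁻¹ * (Λ * I x) ^ (-β)) (hβ : 1 < β)
    (haI : ∀ x > 0, a x * I x ≤ β - 1) {s : ℝ} (hs : 0 < s) :
    IntervalIntegrable (fun x => √(deriv F x)) volume 0 s := by
  have hβ₀ : 0 < β := zero_lt_one.trans hβ
  have hItop := tendsto_nhdsGT_atTop_of_mul_le ha hI hIpos hβ haI
  set k := √(β * (Λ ^ (-β) * (β - 1) / (β / 2) ^ 2))
  have hdom : IntervalIntegrable (fun x => k * ((β / 2) * I x ^ (-(β / 2)) / (x * a x * I x)))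
      volume 0 s := by
    refine intervalIntegrable_deriv_of_nonneg_of_tendsto hs
      (fun x hx => (hasDerivAt_rpow_neg (hI x hx.1) (hIpos x hx.1)).const_mul k)
      (fun x hx => ?_) ((((tendsto_rpow_neg_atTop (half_pos hβ₀)).comp hItop).const_mul k))
      ((hasDerivAt_rpow_neg (p := β / 2) (hI s hs) (hIpos s hs)).continuousAt.tendsto.mono_left
        nhdsWithin_le_nhds |>.const_mul k)
    have := ha x hx.1
    have := hIpos x hx.1
    have := hx.1
    positivity
  refine hdom.mono_fun' ?_ (ae_restrict_of_forall_mem measurableSet_uIoc fun x hx => ?_)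
  · exact ((continuousOn_deriv_of_eq_inv_mul_rpow ha_cont ha hI hIpos hΛ hF).sqrt
      |>.aestronglyMeasurable measurableSet_Ioi).mono_set
      (by rw [uIoc_of_le hs.le]; exact Ioc_subset_Ioi_self)
  · rw [uIoc_of_le hs.le] at hx
    have hD := (deriv_mem_Icc_of_eq_inv_mul_rpow ha hI hIpos hΛ hF hx.1 (haI x hx.1)).2
    rw [hF x hx.1] at hD
    refine (norm_of_nonneg (sqrt_nonneg _)).trans_le
      (sqrt_le_mul_of_le_inv_mul_rpow_div hx.1 (ha x hx.1) (hIpos x hx.1) hΛ (half_pos hβ₀)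
        (sqrt_nonneg _) ?_ hD)
    rw [sq_sqrt (by have := sub_pos.2 hβ; positivity), show 2 * (β / 2) + 1 - β = 1 by ring,
      rpow_one]
    have := haI x hx.1
    gcongr

theorem mul_rpow_neg_le_integral_sqrt_deriv (ha : ∀ x > 0, 0 < a x)
    (hI : ∀ x > 0, HasDerivAt I (-(1 / (x * a x))) x) (hIpos : ∀ x > 0, 0 < I x)
    (hΛ : 0 < Λ) (hF : ∀ x > 0, F x = x⁻¹ * (Λ * I x) ^ (-β)) (hβ : 1 < β)
    (haI : ∀ x > 0, a x * I x ≤ β - 1) {s p k : ℝ} (hs : 0 < s) (hp : 0 < p) (hk : 0 ≤ k)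
    (hkA : ∀ x ∈ Ioo 0 s, k ^ 2 ≤ Λ ^ (-β) * (a x * I x ^ (2 * p + 1 - β)) / p ^ 2)
    (hint : IntervalIntegrable (fun x => √(deriv F x)) volume 0 s) :
    k * I s ^ (-p) ≤ ∫ x in 0..s, √(deriv F x) := by
  have hItop := tendsto_nhdsGT_atTop_of_mul_le ha hI hIpos hβ haI
  have h := sub_le_integral_of_hasDerivAt_of_tendsto hs
    (fun x hx => (hasDerivAt_rpow_neg (hI x hx.1) (hIpos x hx.1)).const_mul k)
    (fun x hx => ?_) (fun x hx => ?_) hint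
    ((((tendsto_rpow_neg_atTop hp).comp hItop).const_mul k))
    ((hasDerivAt_rpow_neg (p := p) (hI s hs) (hIpos s hs)).continuousAt.tendsto.mono_left
        nhdsWithin_le_nhds |>.const_mul k)
  · simpa using h
  · have := ha x hx.1
    have := hIpos x hx.1
    have := hx.1
    positivity
  · have hD := (deriv_mem_Icc_of_eq_inv_mul_rpow ha hI hIpos hΛ hF hx.1 (haI x hx.1)).1
    rw [hF x hx.1] at hD
    exact mul_le_sqrt_of_inv_mul_rpow_div_le hx.1 (ha x hx.1) (hIpos x hx.1) hΛ hp (hkA x hx) hD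

theorem hasDerivAt_of_eq_integral_sqrt_deriv {G : ℝ → ℝ} (ha_cont : ContinuousOn a (Ioi 0))
    (ha : ∀ x > 0, 0 < a x)
    (hI : ∀ x > 0, HasDerivAt I (-(1 / (x * a x))) x) (hIpos : ∀ x > 0, 0 < I x)
    (hΛ : 0 < Λ) (hF : ∀ x > 0, F x = x⁻¹ * (Λ * I x) ^ (-β)) (hβ : 1 < β)
    (haI : ∀ x > 0, a x * I x ≤ β - 1) (hG : ∀ s > 0, G s = ∫ x in 0..s, √(deriv F x))
    {s : ℝ} (hs : 0 < s) : HasDerivAt G (√(deriv F s)) s := by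
  have hcont := (continuousOn_deriv_of_eq_inv_mul_rpow ha_cont ha hI hIpos hΛ hF).sqrt
  exact (integral_hasDerivAt_right
    (intervalIntegrable_sqrt_deriv_of_eq_inv_mul_rpow ha_cont ha hI hIpos hΛ hF hβ haI hs)
    (hcont.stronglyMeasurableAtFilter isOpen_Ioi s hs) (hcont.continuousAt (Ioi_mem_nhds hs)))
    |>.congr_of_eventuallyEq (eventually_of_mem (Ioi_mem_nhds hs) hG)

theorem le_mul_integral_sqrt_deriv_mul_sqrt_deriv (ha_cont : ContinuousOn a (Ioi 0))
    (ha : ∀ x > 0, 0 < a x)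
    (hI : ∀ x > 0, HasDerivAt I (-(1 / (x * a x))) x) (hIpos : ∀ x > 0, 0 < I x)
    (hΛ : 0 < Λ) (hF : ∀ x > 0, F x = x⁻¹ * (Λ * I x) ^ (-β)) (hβ : 1 < β)
    (haI : ∀ x > 0, a x * I x ≤ β - 1) {c μ s : ℝ} (hc : 0 < c) (hμ : 0 < μ) (hs : 0 < s)
    (hq : ∀ x ∈ Ioo 0 s, c * (a s * I s ^ μ) ≤ a x * I x ^ μ) :
    F s ≤ (β - 1 + μ) / 2 / √c * (∫ x in 0..s, √(deriv F x)) * √(deriv F s) := by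
  set γ := (β - 1 + μ) / 2
  have hγ : 0 < γ := by have := sub_pos.2 hβ; positivity
  have hγμ : 2 * γ + 1 - β = μ := by ring
  have has := ha s hs
  have hIs := hIpos s hs
  set k := √(Λ ^ (-β) * (a s * I s ^ μ)) / γ
  have hk₀ : 0 ≤ k := div_nonneg (sqrt_nonneg _) hγ.le
  have hk : k ^ 2 = Λ ^ (-β) * (a s * I s ^ (2 * γ + 1 - β)) / γ ^ 2 := by
    rw [hγμ, div_pow, sq_sqrt (by positivity)]
  have hG : √c * k * I s ^ (-γ) ≤ ∫ x in 0..s, √(deriv F x) := by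
    refine mul_rpow_neg_le_integral_sqrt_deriv ha hI hIpos hΛ hF hβ haI hs hγ (by positivity)
      (fun x hx => ?_)
      (intervalIntegrable_sqrt_deriv_of_eq_inv_mul_rpow ha_cont ha hI hIpos hΛ hF hβ haI hs)
    rw [mul_pow, sq_sqrt hc.le, hk, hγμ, mul_div_assoc', mul_left_comm]
    exact div_le_div_of_nonneg_right
      (mul_le_mul_of_nonneg_left (hq x hx) (rpow_nonneg hΛ.le _)) (sq_nonneg _)
  have hG' : k * (γ * I s ^ (-γ) / (s * a s * I s)) ≤ √(deriv F s) := by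
    have hD := (deriv_mem_Icc_of_eq_inv_mul_rpow ha hI hIpos hΛ hF hs (haI s hs)).1
    rw [hF s hs] at hD
    exact mul_le_sqrt_of_inv_mul_rpow_div_le hs has hIs hΛ hγ hk.le hD
  calc F s = γ / √c * (√c * k * I s ^ (-γ)) * (k * (γ * I s ^ (-γ) / (s * a s * I s))) := by
        rw [hF s hs, inv_mul_rpow_eq hs has hIs hΛ hγ hk]
        field_simp
    _ ≤ γ / √c * (∫ x in 0..s, √(deriv F x)) * √(deriv F s) := by
        gcongr
        exact mul_nonneg (by positivity) ((by positivity : 0 ≤ √c * k * I s ^ (-γ)).trans hG)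

end

/-- Under the quasi-monotonicity assumption `a(u) I(u)^μ ≥ c a(v) I(v)^μ`
for `0 < u < v`, with `H(s) = (Λ I(s))^(-1/Λ)`, `F(s) = s⁻¹ H(s)^(Λ+1)` and
`G(s) = ∫_0^s √(F'(σ)) dσ`, there is `c' > 0` with `F(s) ≤ c' G(s) G'(s)`. -/
theorem stmt10 (a I H F G : ℝ → ℝ) (c μ Λ : ℝ)
    (ha_cont : ContinuousOn a (Ioi 0)) (ha_pos : ∀ s > (0 : ℝ), 0 < a s)
    (hint : ∀ u > (0 : ℝ), IntegrableOn (fun v => 1 / (v * a v)) (Ioi u))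
    (hI : ∀ u > (0 : ℝ), I u = ∫ v in Ioi u, 1 / (v * a v))
    (hc : 0 < c) (hμ : 0 < μ)
    (hquasi : ∀ u v : ℝ, 0 < u → u < v → c * (a v * I v ^ μ) ≤ a u * I u ^ μ)
    (hΛ : 0 < Λ) (hΛsup : ∀ s > (0 : ℝ), Λ * (a s * I s) < 1)
    (hH : ∀ s > (0 : ℝ), H s = (Λ * I s) ^ (-(1 / Λ)))
    (hF : ∀ s > (0 : ℝ), F s = s⁻¹ * H s ^ (Λ + 1))
    (hG : ∀ s > (0 : ℝ), G s = ∫ σ in (0 : ℝ)..s, Real.sqrt (deriv F σ)) :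
    ∃ c' > (0 : ℝ), ∀ s > (0 : ℝ), F s ≤ c' * G s * deriv G s := by
  set β := (Λ + 1) / Λ with hβ_def
  have hβ : β - 1 = Λ⁻¹ := by rw [hβ_def]; field_simp; ring
  have hβ₁ : 1 < β := by linarith [inv_pos.2 hΛ]
  have hI' : ∀ x > 0, HasDerivAt I (-(1 / (x * a x))) x := fun x hx =>
    (hasDerivAt_setIntegral_Ioi (half_lt_self hx) (hint _ (half_pos hx))
      (continuousAt_const.div (continuousAt_id.mul (ha_cont.continuousAt (Ioi_mem_nhds hx)))
        (mul_pos hx (ha_pos x hx)).ne')).congr_of_eventuallyEq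
      (eventually_of_mem (Ioi_mem_nhds hx) hI)
  have hIpos : ∀ x > 0, 0 < I x := fun x hx => by
    rw [hI x hx]
    exact setIntegral_Ioi_pos (hint x hx) fun v hv =>
      one_div_pos.2 (mul_pos (hx.trans hv) (ha_pos v (hx.trans hv)))
  have haI : ∀ x > 0, a x * I x ≤ β - 1 := fun x hx => by
    rw [hβ, ← one_div, le_div_iff₀' hΛ]
    exact (hΛsup x hx).le
  have hF' : ∀ x > 0, F x = x⁻¹ * (Λ * I x) ^ (-β) := fun x hx => by
    rw [hF x hx, hH x hx, ← rpow_mul (mul_pos hΛ (hIpos x hx)).le, hβ_def]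
    congr 2
    field_simp
  refine ⟨(β - 1 + μ) / 2 / √c, by rw [hβ]; positivity, fun s hs => ?_⟩
  rw [(hasDerivAt_of_eq_integral_sqrt_deriv ha_cont ha_pos hI' hIpos hΛ hF' hβ₁ haI hG
    hs).deriv, hG s hs]
  exact le_mul_integral_sqrt_deriv_mul_sqrt_deriv ha_cont ha_pos hI' hIpos hΛ hF' hβ₁ haI hc hμ
    hs fun x hx => hquasi x s hx.1 hx.2
end

section
/- Let β > 0, a(s) = exp(−s^{−β}) for s ∈ (0,1), I(s) = ∫_s^1 t^{−1} exp(t^{−β}) dt, so that a'(s) = β s^{−β−1} exp(−s^{−β}). Then lim_{s→0} s·I(s)·a'(s) = 1. -/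
/-!
Put `g(s) = β⁻¹ s^β exp(s^{-β})`; for `s > 0` the expression is `I(s) / g(s)`. Both `I(s)` and
`g(s)` tend to `+∞` as `s → 0⁺`, while `I'(s) / g'(s) = (1 - s^β)⁻¹ → 1`, so the limit is `1` by
L'Hôpital's rule in its `∞ / ∞` form, which follows from Cauchy's mean value theorem.
-/

open Real Filter intervalIntegral Set Topology

theorem exists_deriv_div_eq_sub_div_sub {f f' g g' : ℝ → ℝ} {x c : ℝ} (hxc : x < c)
    (hff' : ∀ y ∈ Icc x c, HasDerivAt f (f' y) y) (hgg' : ∀ y ∈ Icc x c, HasDerivAt g (g' y) y)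
    (hg' : ∀ y ∈ Ioo x c, g' y ≠ 0) (hg : g x ≠ g c) :
    ∃ ξ ∈ Ioo x c, f' ξ / g' ξ = (f c - f x) / (g c - g x) := by
  obtain ⟨ξ, hξ, h⟩ := exists_ratio_hasDerivAt_eq_ratio_slope f f' hxc
    (fun y hy => (hff' y hy).continuousAt.continuousWithinAt)
    (fun y hy => hff' y (Ioo_subset_Icc_self hy)) g g'
    (fun y hy => (hgg' y hy).continuousAt.continuousWithinAt)
    (fun y hy => hgg' y (Ioo_subset_Icc_self hy))
  refine ⟨ξ, hξ, ?_⟩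
  rw [div_eq_div_iff (hg' ξ hξ) (sub_ne_zero.2 hg.symm)]
  linear_combination h

theorem HasDerivAt.lhopital_atTop_right_on_Ioo {a b L : ℝ} {f f' g g' : ℝ → ℝ} (hab : a < b)
    (hff' : ∀ x ∈ Ioo a b, HasDerivAt f (f' x) x) (hgg' : ∀ x ∈ Ioo a b, HasDerivAt g (g' x) x)
    (hg' : ∀ x ∈ Ioo a b, g' x ≠ 0) (hg : Tendsto g (𝓝[>] a) atTop)
    (hdiv : Tendsto (fun x => f' x / g' x) (𝓝[>] a) (𝓝 L)) :
    Tendsto (fun x => f x / g x) (𝓝[>] a) (𝓝 L) := by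
  refine Metric.tendsto_nhds.2 fun ε hε => ?_
  obtain ⟨b', hab', hb'b⟩ := exists_between hab
  obtain ⟨c, ⟨hac, hcb'⟩, hc⟩ := (mem_nhdsGT_iff_exists_mem_Ioc_Ioo_subset hab').1
    (Metric.tendsto_nhds.1 hdiv _ (half_pos hε))
  have hcb : c < b := hcb'.trans_lt hb'b
  set r := fun x => (f c - f x) / (g c - g x)
  have hgc : ∀ᶠ x in 𝓝[>] a, g c < g x := hg.eventually_gt_atTop (g c)
  have hr : ∀ᶠ x in 𝓝[>] a, dist (r x) L < ε / 2 := by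
    filter_upwards [hgc, Ioo_mem_nhdsGT hac] with x hgx hx
    have hsub : Icc x c ⊆ Ioo a b := Icc_subset_Ioo hx.1 hcb
    obtain ⟨ξ, hξ, hξr⟩ := exists_deriv_div_eq_sub_div_sub hx.2 (fun y hy => hff' y (hsub hy))
      (fun y hy => hgg' y (hsub hy)) (fun y hy => hg' y (hsub (Ioo_subset_Icc_self hy))) hgx.ne'
    rw [show r x = f' ξ / g' ξ from hξr.symm]
    exact hc ⟨hx.1.trans hξ.1, hξ.2⟩
  have hr_bdd : IsBoundedUnder (· ≤ ·) (𝓝[>] a) (norm ∘ r) := by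
    refine isBoundedUnder_of_eventually_le (a := ‖L‖ + ε / 2) (hr.mono fun x hx => ?_)
    have hnorm := norm_le_norm_add_norm_sub' (r x) L
    rw [← dist_eq_norm] at hnorm
    simp only [Function.comp_apply]
    linarith
  -- `f / g - r = (f c - r * g c) / g`, and `r` stays bounded while `g → ∞`
  have hsmall : Tendsto (fun x => f c / g x - g c / g x * r x) (𝓝[>] a) (𝓝 0) := by
    simpa using (tendsto_const_nhds.div_atTop hg).sub
      ((tendsto_const_nhds.div_atTop hg).zero_mul_isBoundedUnder_le hr_bdd)
  filter_upwards [hr, Metric.tendsto_nhds.1 hsmall _ (half_pos hε), hgc, hg.eventually_gt_atTop 0]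
    with x hrx hsx hgx hgx0
  have hfg : f x / g x = r x + (f c / g x - g c / g x * r x) := by
    have : g c - g x ≠ 0 := by linarith
    simp only [r]
    field_simp
    ring
  rw [hfg, Real.dist_eq, abs_lt]
  rw [Real.dist_eq, abs_lt] at hrx hsx
  constructor <;> linarith

theorem ContinuousOn.hasDerivAt_integral_left {E : Type*} [NormedAddCommGroup E]
    [NormedSpace ℝ E] [CompleteSpace E] {f : ℝ → E} {U : Set ℝ} {s b : ℝ}
    (hf : ContinuousOn f U) (hU : IsOpen U) (hsb : uIcc s b ⊆ U) :
    HasDerivAt (fun u => ∫ t in u..b, f t) (-f s) s :=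
  integral_hasDerivAt_left (hf.mono hsb).intervalIntegrable
    (hf.stronglyMeasurableAtFilter hU s (hsb left_mem_uIcc))
    (hf.continuousAt (hU.mem_nhds (hsb left_mem_uIcc)))

theorem continuousOn_inv_mul_exp_rpow (β : ℝ) :
    ContinuousOn (fun t : ℝ => t⁻¹ * exp (t ^ (-β))) (Ioi 0) := by
  have h0 : ∀ t ∈ Ioi (0 : ℝ), t ≠ 0 := fun t ht => ne_of_gt ht
  exact (continuousOn_inv₀.mono h0).mul
    (continuous_exp.comp_continuousOn (continuousOn_id.rpow_const fun t ht => Or.inl (h0 t ht)))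

theorem hasDerivAt_rpow_mul_exp_rpow_neg_div {β s : ℝ} (hβ : β ≠ 0) (hs : 0 < s) :
    HasDerivAt (fun s => s ^ β * exp (s ^ (-β)) / β) ((s ^ β - 1) * s⁻¹ * exp (s ^ (-β))) s := by
  have h := (((hasDerivAt_rpow_const (p := β) (Or.inl hs.ne')).mul
    (hasDerivAt_rpow_const (p := -β) (Or.inl hs.ne')).exp).div_const β)
  refine h.congr_deriv ?_
  rw [rpow_sub_one hs.ne', rpow_sub_one hs.ne', rpow_neg hs.le]
  field_simp
  ring

theorem tendsto_rpow_mul_exp_rpow_neg_div_atTop {β : ℝ} (hβ : 0 < β) :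
    Tendsto (fun s => s ^ β * exp (s ^ (-β)) / β) (𝓝[>] 0) atTop := by
  have h := ((tendsto_exp_div_rpow_atTop 1).comp
    (tendsto_rpow_neg_nhdsGT_zero (neg_lt_zero.2 hβ))).atTop_div_const hβ
  refine h.congr' ?_
  filter_upwards [self_mem_nhdsWithin] with s hs
  simp only [Function.comp_apply, rpow_one, rpow_neg (le_of_lt hs), div_inv_eq_mul, mul_comm]

theorem tendsto_inv_mul_exp_div_rpow_sub_one {β : ℝ} (hβ : 0 < β) :
    Tendsto (fun s : ℝ => -(s⁻¹ * exp (s ^ (-β))) / ((s ^ β - 1) * s⁻¹ * exp (s ^ (-β))))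
      (𝓝[>] 0) (𝓝 1) := by
  have hpow : Tendsto (fun s : ℝ => s ^ β) (𝓝[>] 0) (𝓝 0) := by
    simpa [zero_rpow hβ.ne'] using
      (continuousAt_rpow_const 0 β (Or.inr hβ.le)).tendsto.mono_left nhdsWithin_le_nhds
  have h : Tendsto (fun s : ℝ => (1 - s ^ β)⁻¹) (𝓝[>] 0) (𝓝 1) := by
    simpa using (tendsto_const_nhds.sub hpow).inv₀ (by norm_num : (1 : ℝ) - 0 ≠ 0)
  refine h.congr' ?_
  filter_upwards [self_mem_nhdsWithin] with s hs
  have hx : s⁻¹ * exp (s ^ (-β)) ≠ 0 := mul_ne_zero (inv_ne_zero (ne_of_gt hs)) (exp_ne_zero _)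
  rw [mul_assoc, neg_div, div_mul_cancel_right₀ hx, ← inv_neg, neg_sub]

/-- Exponential-degeneracy example: with `a(s) = exp(−s^{−β})`,
`a'(s) = β s^{−β−1} exp(−s^{−β})` and `I(s) = ∫_s^1 t⁻¹ exp(t^{−β}) dt`,
one has `s I(s) a'(s) → 1` as `s → 0⁺`. -/
theorem stmt14 (β : ℝ) (hβ : 0 < β) :
    Tendsto
      (fun s : ℝ =>
        s * (∫ t in s..1, t⁻¹ * Real.exp (t ^ (-β))) *
          (β * s ^ (-β - 1) * Real.exp (-s ^ (-β))))
      (nhdsWithin 0 (Set.Ioi 0)) (nhds 1) := by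
  have hlim := HasDerivAt.lhopital_atTop_right_on_Ioo zero_lt_one
    (fun s hs => (continuousOn_inv_mul_exp_rpow β).hasDerivAt_integral_left isOpen_Ioi
      (by rw [uIcc_of_le hs.2.le]; exact fun t ht => hs.1.trans_le ht.1))
    (fun s hs => hasDerivAt_rpow_mul_exp_rpow_neg_div hβ.ne' hs.1)
    (fun s hs => mul_ne_zero (mul_ne_zero (sub_neg.2 (rpow_lt_one hs.1.le hs.2 hβ)).ne
      (inv_ne_zero hs.1.ne')) (exp_ne_zero _))
    (tendsto_rpow_mul_exp_rpow_neg_div_atTop hβ) (tendsto_inv_mul_exp_div_rpow_sub_one hβ)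
  refine hlim.congr' ?_
  filter_upwards [self_mem_nhdsWithin] with s hs
  have hs0 : s ≠ 0 := ne_of_gt hs
  rw [rpow_sub_one hs0, rpow_neg (le_of_lt hs), exp_neg]
  field_simp
end

section
/- Let ζ : (0,1] → ℝ be continuous with 0 < k₁ ≤ ζ(s) ≤ k₂, define a(s) = exp(−∫_s^1 ζ(τ)/τ dτ) and I(s) = ∫_s^1 t^{−1} exp(∫_t^1 ζ(τ)/τ dτ) dt. Then limsup_{s→0} a(s)·I(s) ≤ 1/k₁; in particular if ζ(s) → ℓ as s → 0 then a(s)I(s) → 1/ℓ. -/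
open Real Filter intervalIntegral
open Set MeasureTheory Topology

/-!
Write `E(t) = exp (∫_t^1 ζ(τ)/τ dτ) = 1 / a(t)`. Then `-E' = (ζ/t) E`, so the integrand `E/t` of
`I` equals `-E'/ζ`. If `m ≤ ζ ≤ M` on `(0, δ]`, integrating over `[s, δ]` gives
`(E(s) - E(δ))/M ≤ ∫_s^δ E/t ≤ (E(s) - E(δ))/m`. Since `ζ ≥ k₁ > 0` forces `E(s) ≥ s^(-k₁) → ∞`,
dividing by `E(s)` kills both `E(δ)` and the integral over `[δ, 1]`, so `a(s) I(s)` is eventually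
squeezed between numbers close to `1/M` and `1/m`.
-/

/-- In the paper's notation `expPrimitive ζ = 1 / a`, `weightIntegral ζ = I` and
`weightProduct ζ = a * I`. -/
noncomputable def expPrimitive (ζ : ℝ → ℝ) (t : ℝ) : ℝ := exp (∫ τ in t..1, ζ τ / τ)

noncomputable def weightIntegral (ζ : ℝ → ℝ) (s : ℝ) : ℝ := ∫ t in s..1, t⁻¹ * expPrimitive ζ t

noncomputable def weightProduct (ζ : ℝ → ℝ) (s : ℝ) : ℝ := (expPrimitive ζ s)⁻¹ * weightIntegral ζ s

lemma intervalIntegrable_of_continuousOn_Ioc {f : ℝ → ℝ} (hf : ContinuousOn f (Ioc 0 1))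
    {a b : ℝ} (ha : a ∈ Ioc 0 1) (hb : b ∈ Ioc 0 1) : IntervalIntegrable f volume a b :=
  (hf.mono (ordConnected_Ioc.uIcc_subset ha hb)).intervalIntegrable

section

variable {ζ : ℝ → ℝ}

lemma expPrimitive_pos (ζ : ℝ → ℝ) (t : ℝ) : 0 < expPrimitive ζ t := exp_pos _

@[simp]
lemma expPrimitive_one : expPrimitive ζ 1 = 1 := by simp [expPrimitive]

@[simp]
lemma weightIntegral_one : weightIntegral ζ 1 = 0 := integral_same

lemma continuousOn_div_id (hζc : ContinuousOn ζ (Ioc 0 1)) :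
    ContinuousOn (fun τ => ζ τ / τ) (Ioc 0 1) :=
  hζc.div continuousOn_id fun _ hτ => hτ.1.ne'

lemma continuousOn_expPrimitive (hζc : ContinuousOn ζ (Ioc 0 1)) :
    ContinuousOn (expPrimitive ζ) (Ioc 0 1) := by
  refine continuousOn_of_locally_continuousOn fun x hx =>
    ⟨Ioi (x / 2), isOpen_Ioi, half_lt_self hx.1, ?_⟩
  have hsub : uIcc (x / 2) 1 ⊆ Ioc 0 1 :=
    ordConnected_Ioc.uIcc_subset ⟨half_pos hx.1, by linarith [hx.2]⟩ ⟨one_pos, le_rfl⟩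
  have hF : ContinuousOn (fun t => ∫ τ in t..1, ζ τ / τ) (uIcc (x / 2) 1) :=
    continuousOn_primitive_interval_left ((continuousOn_div_id hζc).mono hsub).integrableOn_uIcc
  refine hF.rexp.mono fun y hy => ?_
  rw [uIcc_of_le (by linarith [hx.2])]
  exact ⟨hy.2.out.le, hy.1.2⟩

lemma hasDerivAt_expPrimitive (hζc : ContinuousOn ζ (Ioc 0 1)) {x : ℝ} (hx : x ∈ Ioo 0 1) :
    HasDerivAt (expPrimitive ζ) (-(ζ x / x * expPrimitive ζ x)) x := by
  have hF : HasDerivAt (fun t => ∫ τ in t..1, ζ τ / τ) (-(ζ x / x)) x := by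
    refine integral_hasDerivAt_left
      (intervalIntegrable_of_continuousOn_Ioc (continuousOn_div_id hζc) ⟨hx.1, hx.2.le⟩
        ⟨one_pos, le_rfl⟩) ?_ ?_
    · exact ((continuousOn_div_id hζc).mono Ioo_subset_Ioc_self).stronglyMeasurableAtFilter
        isOpen_Ioo x hx
    · exact (continuousOn_div_id hζc).continuousAt (Ioc_mem_nhds hx.1 hx.2)
  exact hF.exp.congr_deriv (by rw [expPrimitive]; ring)

variable {s δ : ℝ}

lemma intervalIntegrable_div_mul_expPrimitive (hζc : ContinuousOn ζ (Ioc 0 1)) {a b : ℝ}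
    (ha : a ∈ Ioc 0 1) (hb : b ∈ Ioc 0 1) :
    IntervalIntegrable (fun t => ζ t / t * expPrimitive ζ t) volume a b :=
  intervalIntegrable_of_continuousOn_Ioc
    ((continuousOn_div_id hζc).mul (continuousOn_expPrimitive hζc)) ha hb

lemma integral_div_mul_expPrimitive (hζc : ContinuousOn ζ (Ioc 0 1)) (hs : 0 < s)
    (hsδ : s ≤ δ) (hδ : δ ≤ 1) :
    ∫ t in s..δ, ζ t / t * expPrimitive ζ t = expPrimitive ζ s - expPrimitive ζ δ := by
  have hIcc : Icc s δ ⊆ Ioc 0 1 := fun t ht => ⟨hs.trans_le ht.1, ht.2.trans hδ⟩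
  have hFTC := integral_eq_sub_of_hasDeriv_right_of_le hsδ
    ((continuousOn_expPrimitive hζc).mono hIcc)
    (fun x hx => (hasDerivAt_expPrimitive hζc
      ⟨hs.trans hx.1, hx.2.trans_le hδ⟩).hasDerivWithinAt)
    (intervalIntegrable_div_mul_expPrimitive hζc (hIcc ⟨le_rfl, hsδ⟩) (hIcc ⟨hsδ, le_rfl⟩)).neg
  rw [intervalIntegral.integral_neg] at hFTC
  linarith

lemma intervalIntegrable_inv_mul_expPrimitive (hζc : ContinuousOn ζ (Ioc 0 1)) {a b : ℝ}
    (ha : a ∈ Ioc 0 1) (hb : b ∈ Ioc 0 1) :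
    IntervalIntegrable (fun t => t⁻¹ * expPrimitive ζ t) volume a b :=
  intervalIntegrable_of_continuousOn_Ioc
    ((continuousOn_inv₀.mono fun _ ht => ht.1.ne').mul (continuousOn_expPrimitive hζc)) ha hb

lemma integral_inv_mul_expPrimitive_le {m : ℝ} (hζc : ContinuousOn ζ (Ioc 0 1)) (hm : 0 < m)
    (hs : 0 < s) (hsδ : s ≤ δ) (hδ : δ ≤ 1) (hζm : ∀ t ∈ Icc s δ, m ≤ ζ t) :
    ∫ t in s..δ, t⁻¹ * expPrimitive ζ t ≤ (expPrimitive ζ s - expPrimitive ζ δ) / m := by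
  rw [← integral_div_mul_expPrimitive hζc hs hsδ hδ, ← intervalIntegral.integral_div]
  refine integral_mono_on hsδ
    (intervalIntegrable_inv_mul_expPrimitive hζc ⟨hs, hsδ.trans hδ⟩ ⟨hs.trans_le hsδ, hδ⟩)
    ((intervalIntegrable_div_mul_expPrimitive hζc ⟨hs, hsδ.trans hδ⟩
      ⟨hs.trans_le hsδ, hδ⟩).div_const m) fun t ht => ?_
  have hpos : 0 ≤ t⁻¹ * expPrimitive ζ t :=
    mul_nonneg (inv_nonneg.2 (hs.trans_le ht.1).le) (expPrimitive_pos ζ t).le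
  rw [le_div_iff₀ hm]
  calc t⁻¹ * expPrimitive ζ t * m ≤ t⁻¹ * expPrimitive ζ t * ζ t :=
        mul_le_mul_of_nonneg_left (hζm t ht) hpos
    _ = ζ t / t * expPrimitive ζ t := by ring

lemma div_le_integral_inv_mul_expPrimitive {M : ℝ} (hζc : ContinuousOn ζ (Ioc 0 1))
    (hM : 0 < M) (hs : 0 < s) (hsδ : s ≤ δ) (hδ : δ ≤ 1) (hζM : ∀ t ∈ Icc s δ, ζ t ≤ M) :
    (expPrimitive ζ s - expPrimitive ζ δ) / M ≤ ∫ t in s..δ, t⁻¹ * expPrimitive ζ t := by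
  rw [← integral_div_mul_expPrimitive hζc hs hsδ hδ, ← intervalIntegral.integral_div]
  refine integral_mono_on hsδ
    ((intervalIntegrable_div_mul_expPrimitive hζc ⟨hs, hsδ.trans hδ⟩
      ⟨hs.trans_le hsδ, hδ⟩).div_const M)
    (intervalIntegrable_inv_mul_expPrimitive hζc ⟨hs, hsδ.trans hδ⟩ ⟨hs.trans_le hsδ, hδ⟩)
    fun t ht => ?_
  have hpos : 0 ≤ t⁻¹ * expPrimitive ζ t :=
    mul_nonneg (inv_nonneg.2 (hs.trans_le ht.1).le) (expPrimitive_pos ζ t).le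
  rw [div_le_iff₀ hM]
  calc ζ t / t * expPrimitive ζ t = t⁻¹ * expPrimitive ζ t * ζ t := by ring
    _ ≤ t⁻¹ * expPrimitive ζ t * M := mul_le_mul_of_nonneg_left (hζM t ht) hpos

lemma weightIntegral_eq_integral_add (hζc : ContinuousOn ζ (Ioc 0 1)) (hs : 0 < s)
    (hsδ : s ≤ δ) (hδ : δ ≤ 1) :
    weightIntegral ζ s = (∫ t in s..δ, t⁻¹ * expPrimitive ζ t) + weightIntegral ζ δ :=
  (integral_add_adjacent_intervals
    (intervalIntegrable_inv_mul_expPrimitive hζc ⟨hs, hsδ.trans hδ⟩ ⟨hs.trans_le hsδ, hδ⟩)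
    (intervalIntegrable_inv_mul_expPrimitive hζc ⟨hs.trans_le hsδ, hδ⟩ ⟨one_pos, le_rfl⟩)).symm

lemma weightProduct_le {m : ℝ} (hζc : ContinuousOn ζ (Ioc 0 1)) (hm : 0 < m) (hs : 0 < s)
    (hsδ : s ≤ δ) (hδ : δ ≤ 1) (hζm : ∀ t ∈ Icc s δ, m ≤ ζ t) :
    weightProduct ζ s ≤
      (expPrimitive ζ s)⁻¹ * (weightIntegral ζ δ - expPrimitive ζ δ / m) + m⁻¹ := by
  have hE := expPrimitive_pos ζ s
  calc weightProduct ζ s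
      ≤ (expPrimitive ζ s)⁻¹ *
          ((expPrimitive ζ s - expPrimitive ζ δ) / m + weightIntegral ζ δ) := by
        rw [weightProduct, weightIntegral_eq_integral_add hζc hs hsδ hδ]
        gcongr
        exact integral_inv_mul_expPrimitive_le hζc hm hs hsδ hδ hζm
    _ = _ := by field_simp; ring

lemma le_weightProduct {M : ℝ} (hζc : ContinuousOn ζ (Ioc 0 1)) (hM : 0 < M) (hs : 0 < s)
    (hsδ : s ≤ δ) (hδ : δ ≤ 1) (hζM : ∀ t ∈ Icc s δ, ζ t ≤ M) :
    (expPrimitive ζ s)⁻¹ * (weightIntegral ζ δ - expPrimitive ζ δ / M) + M⁻¹ ≤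
      weightProduct ζ s := by
  have hE := expPrimitive_pos ζ s
  calc (expPrimitive ζ s)⁻¹ * (weightIntegral ζ δ - expPrimitive ζ δ / M) + M⁻¹
      = (expPrimitive ζ s)⁻¹ *
          ((expPrimitive ζ s - expPrimitive ζ δ) / M + weightIntegral ζ δ) := by
        field_simp; ring
    _ ≤ weightProduct ζ s := by
        rw [weightProduct, weightIntegral_eq_integral_add hζc hs hsδ hδ]
        gcongr
        exact div_le_integral_inv_mul_expPrimitive hζc hM hs hsδ hδ hζM

lemma weightProduct_nonneg (hs : s ∈ Ioc 0 1) : 0 ≤ weightProduct ζ s :=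
  mul_nonneg (inv_nonneg.2 (expPrimitive_pos ζ s).le) <| integral_nonneg hs.2 fun t ht =>
    mul_nonneg (inv_nonneg.2 (hs.1.trans_le ht.1).le) (expPrimitive_pos ζ t).le

lemma tendsto_expPrimitive_atTop (hζc : ContinuousOn ζ (Ioc 0 1)) {k : ℝ} (hk : 0 < k)
    (hζk : ∀ t ∈ Ioc 0 1, k ≤ ζ t) : Tendsto (expPrimitive ζ) (𝓝[>] 0) atTop := by
  have hlog : ∀ s ∈ Ioc (0 : ℝ) 1, k * -log s ≤ ∫ τ in s..1, ζ τ / τ := fun s hs => calc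
    k * -log s = ∫ τ in s..1, k * τ⁻¹ := by
      rw [intervalIntegral.integral_const_mul, integral_inv_of_pos hs.1 one_pos, one_div, log_inv]
    _ ≤ ∫ τ in s..1, ζ τ / τ := by
      refine integral_mono_on hs.2
        ((intervalIntegrable_of_continuousOn_Ioc
          (continuousOn_inv₀.mono fun _ ht => ht.1.ne') hs ⟨one_pos, le_rfl⟩).const_mul k)
        (intervalIntegrable_of_continuousOn_Ioc (continuousOn_div_id hζc) hs ⟨one_pos, le_rfl⟩)
        fun τ hτ => ?_
      rw [div_eq_mul_inv]
      exact mul_le_mul_of_nonneg_right (hζk τ ⟨hs.1.trans_le hτ.1, hτ.2⟩)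
        (inv_nonneg.2 (hs.1.trans_le hτ.1).le)
  refine tendsto_exp_atTop.comp (tendsto_atTop_mono' _ ?_
    ((tendsto_neg_atBot_atTop.comp tendsto_log_nhdsGT_zero).const_mul_atTop hk))
  filter_upwards [Ioc_mem_nhdsGT one_pos] using hlog

lemma limsup_weightProduct_le (hζc : ContinuousOn ζ (Ioc 0 1)) {k : ℝ} (hk : 0 < k)
    (hζk : ∀ t ∈ Ioc 0 1, k ≤ ζ t) : limsup (weightProduct ζ) (𝓝[>] 0) ≤ k⁻¹ := by
  have hnonneg : ∀ᶠ s in 𝓝[>] 0, 0 ≤ weightProduct ζ s := by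
    filter_upwards [Ioc_mem_nhdsGT one_pos] with s hs using weightProduct_nonneg hs
  refine limsup_le_of_le (isBoundedUnder_of_eventually_ge hnonneg).isCoboundedUnder_le ?_
  filter_upwards [Ioc_mem_nhdsGT one_pos] with s hs
  have hbound := weightProduct_le hζc hk hs.1 hs.2 le_rfl
    fun t ht => hζk t ⟨hs.1.trans_le ht.1, ht.2⟩
  rw [weightIntegral_one, expPrimitive_one] at hbound
  have hneg : (expPrimitive ζ s)⁻¹ * (0 - 1 / k) ≤ 0 :=
    mul_nonpos_of_nonneg_of_nonpos (inv_nonneg.2 (expPrimitive_pos ζ s).le) (by simp [hk.le])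
  linarith

lemma exists_Ioc_subset_of_eventually {p : ℝ → Prop} (hp : ∀ᶠ t in 𝓝[>] 0, p t) :
    ∃ δ ∈ Ioc (0 : ℝ) 1, ∀ t ∈ Ioc 0 δ, p t := by
  obtain ⟨u, hu, hsub⟩ := mem_nhdsGT_iff_exists_Ioc_subset.1 hp
  exact ⟨min u 1, ⟨lt_min hu one_pos, min_le_right _ _⟩,
    fun t ht => hsub ⟨ht.1, ht.2.trans (min_le_left _ _)⟩⟩

lemma tendsto_inv_expPrimitive_mul_add (hE : Tendsto (expPrimitive ζ) (𝓝[>] 0) atTop)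
    (C c : ℝ) : Tendsto (fun s => (expPrimitive ζ s)⁻¹ * C + c) (𝓝[>] 0) (𝓝 c) := by
  simpa using ((tendsto_inv_atTop_zero.comp hE).mul_const C).add_const c

lemma eventually_weightProduct_lt (hζc : ContinuousOn ζ (Ioc 0 1))
    (hE : Tendsto (expPrimitive ζ) (𝓝[>] 0) atTop) {m b : ℝ} (hm : 0 < m)
    (hζm : ∀ᶠ t in 𝓝[>] 0, m ≤ ζ t) (hb : m⁻¹ < b) : ∀ᶠ s in 𝓝[>] 0, weightProduct ζ s < b := by
  obtain ⟨δ, hδ, hδm⟩ := exists_Ioc_subset_of_eventually hζm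
  filter_upwards [(tendsto_inv_expPrimitive_mul_add hE _ _).eventually (gt_mem_nhds hb),
    Ioo_mem_nhdsGT hδ.1] with s hsb hs
  exact (weightProduct_le hζc hm hs.1 hs.2.le hδ.2
    fun t ht => hδm t ⟨hs.1.trans_le ht.1, ht.2⟩).trans_lt hsb

lemma eventually_lt_weightProduct (hζc : ContinuousOn ζ (Ioc 0 1))
    (hE : Tendsto (expPrimitive ζ) (𝓝[>] 0) atTop) {M a : ℝ} (hM : 0 < M)
    (hζM : ∀ᶠ t in 𝓝[>] 0, ζ t ≤ M) (ha : a < M⁻¹) : ∀ᶠ s in 𝓝[>] 0, a < weightProduct ζ s := by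
  obtain ⟨δ, hδ, hδM⟩ := exists_Ioc_subset_of_eventually hζM
  filter_upwards [(tendsto_inv_expPrimitive_mul_add hE _ _).eventually (lt_mem_nhds ha),
    Ioo_mem_nhdsGT hδ.1] with s has hs
  exact has.trans_le (le_weightProduct hζc hM hs.1 hs.2.le hδ.2
    fun t ht => hδM t ⟨hs.1.trans_le ht.1, ht.2⟩)

lemma tendsto_weightProduct (hζc : ContinuousOn ζ (Ioc 0 1))
    (hE : Tendsto (expPrimitive ζ) (𝓝[>] 0) atTop) {ℓ : ℝ} (hℓ : 0 < ℓ)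
    (hζℓ : Tendsto ζ (𝓝[>] 0) (𝓝 ℓ)) : Tendsto (weightProduct ζ) (𝓝[>] 0) (𝓝 ℓ⁻¹) := by
  have hinv : Tendsto (fun x : ℝ => x⁻¹) (𝓝 ℓ) (𝓝 ℓ⁻¹) := tendsto_id.inv₀ hℓ.ne'
  refine tendsto_order.2 ⟨fun a ha => ?_, fun b hb => ?_⟩
  · obtain ⟨M, hMa, hℓM⟩ := ((hinv.mono_left nhdsWithin_le_nhds).eventually (lt_mem_nhds ha)).and
      (self_mem_nhdsWithin (s := Ioi ℓ)) |>.exists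
    exact eventually_lt_weightProduct hζc hE (hℓ.trans hℓM)
      ((hζℓ.eventually (gt_mem_nhds hℓM)).mono fun _ h => h.le) hMa
  · obtain ⟨m, hmb, hm⟩ := ((hinv.mono_left nhdsWithin_le_nhds).eventually (gt_mem_nhds hb)).and
      (Ioo_mem_nhdsLT hℓ) |>.exists
    exact eventually_weightProduct_lt hζc hE hm.1
      ((hζℓ.eventually (lt_mem_nhds hm.2)).mono fun _ h => h.le) hmb

end

/-- Logarithmic-weight example: for continuous `ζ` with `0 < k₁ ≤ ζ ≤ k₂`,
`a(s) = exp(−∫_s^1 ζ(τ)/τ dτ)` and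
`I(s) = ∫_s^1 t⁻¹ exp(∫_t^1 ζ(τ)/τ dτ) dt`, one has
`limsup_{s→0⁺} a(s) I(s) ≤ 1/k₁`; and if `ζ(s) → ℓ` as `s → 0⁺`, then
`a(s) I(s) → 1/ℓ`. -/
theorem stmt15 (ζ : ℝ → ℝ) (k₁ k₂ : ℝ) (hk₁ : 0 < k₁)
    (hζc : ContinuousOn ζ (Set.Ioc 0 1))
    (hζb : ∀ s ∈ Set.Ioc (0 : ℝ) 1, k₁ ≤ ζ s ∧ ζ s ≤ k₂) :
    Filter.limsup
        (fun s : ℝ =>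
          Real.exp (-(∫ τ in s..1, ζ τ / τ)) *
            ∫ t in s..1, t⁻¹ * Real.exp (∫ τ in t..1, ζ τ / τ))
        (nhdsWithin 0 (Set.Ioi 0)) ≤ 1 / k₁ ∧
      ∀ ℓ : ℝ, Tendsto ζ (nhdsWithin 0 (Set.Ioi 0)) (nhds ℓ) →
        Tendsto
          (fun s : ℝ =>
            Real.exp (-(∫ τ in s..1, ζ τ / τ)) *
              ∫ t in s..1, t⁻¹ * Real.exp (∫ τ in t..1, ζ τ / τ))
          (nhdsWithin 0 (Set.Ioi 0)) (nhds (1 / ℓ)) := by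
  have hproduct : (fun s : ℝ => Real.exp (-(∫ τ in s..1, ζ τ / τ)) *
      ∫ t in s..1, t⁻¹ * Real.exp (∫ τ in t..1, ζ τ / τ)) = weightProduct ζ := by
    funext s
    rw [Real.exp_neg]
    rfl
  rw [hproduct, one_div]
  have hζk₁ : ∀ t ∈ Ioc 0 1, k₁ ≤ ζ t := fun t ht => (hζb t ht).1
  refine ⟨limsup_weightProduct_le hζc hk₁ hζk₁, fun ℓ hζℓ => ?_⟩
  have hℓ : k₁ ≤ ℓ := ge_of_tendsto hζℓ <| by
    filter_upwards [Ioc_mem_nhdsGT one_pos] using hζk₁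
  rw [one_div]
  exact tendsto_weightProduct hζc (tendsto_expPrimitive_atTop hζc hk₁ hζk₁) (hk₁.trans_le hℓ) hζℓ
end
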